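/- Let G be a finite connected graph with edge set L and let Ω be the set of 0-1 incidence vectors of spanning trees of G. Then the projection onto the α-coordinates of the set { (α, β) : β ∈ conv(Ω), 0 ≤ α ≤ β } equals the convex hull of incidence vectors of spanning forests of G. -/

import Mathlib

/-! Every forest extends to a spanning tree, which dominates it coordinatewise; as the set of
vectors lying below some point of a convex set (and above `0`) is convex, the spanning forest
polytope is contained in the projection. Conversely, if `0 ≤ α ≤ β = ∑ wᵢ χ(Tᵢ)`, then
`α = ∑ wᵢ (α / β) χ(Tᵢ)` coordinatewise, and each `(α / β) χ(Tᵢ)` lies in the box `[0, χ(Tᵢ)]`,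
which is the convex hull of the incidence vectors of the subforests of the tree `Tᵢ`. -/

open scoped Classical

/-- Incidence vector of a graph's edge set, as a function on the edges of G. -/
noncomputable def incVec {V : Type*} (G H : SimpleGraph V) : G.edgeSet → ℝ :=
  fun e => if (e : Sym2 V) ∈ H.edgeSet then 1 else 0

theorem Convex.setOf_exists_mem_Icc_zero {E : Type*} [AddCommGroup E] [PartialOrder E]
    [IsOrderedAddMonoid E] [Module ℝ E] [PosSMulMono ℝ E] {C : Set E} (hC : Convex ℝ C) :
    Convex ℝ {x | ∃ y ∈ C, x ∈ Set.Icc 0 y} := by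
  rintro x ⟨y, hy, hx0, hxy⟩ x' ⟨y', hy', hx0', hxy'⟩ a b ha hb hab
  exact ⟨a • y + b • y', hC hy hy' ha hb hab,
    add_nonneg (smul_nonneg ha hx0) (smul_nonneg hb hx0'),
    add_le_add (smul_le_smul_of_nonneg_left hxy ha) (smul_le_smul_of_nonneg_left hxy' hb)⟩

theorem Set.Icc_zero_subset_of_mem_convexHull {ι : Type*} {S K : Set (ι → ℝ)}
    (hK : Convex ℝ K) (hSK : ∀ z ∈ S, 0 ≤ z ∧ Set.Icc 0 z ⊆ K) {β : ι → ℝ}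
    (hβ : β ∈ convexHull ℝ S) : Set.Icc 0 β ⊆ K := by
  rintro α ⟨hα0, hαβ⟩
  have hβ0 : 0 ≤ β := hα0.trans hαβ
  -- where `β i = 0` also `α i = 0`, so the junk value `0 / 0 = 0` does no harm
  have hscale : α = (α / β) * β :=
    funext fun i => (div_mul_cancel_of_imp fun h => le_antisymm (h ▸ hαβ i) (hα0 i)).symm
  have hmem : (α / β) * β ∈ LinearMap.mulLeft ℝ (α / β) '' convexHull ℝ S := ⟨β, hβ, rfl⟩
  rw [LinearMap.image_convexHull, hscale.symm] at hmem
  refine convexHull_min ?_ hK hmem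
  rintro _ ⟨z, hz, rfl⟩
  obtain ⟨hz0, hzK⟩ := hSK z hz
  exact hzK ⟨fun i => mul_nonneg (div_nonneg (hα0 i) (hβ0 i)) (hz0 i),
    fun i => mul_le_of_le_one_left (hz0 i) (div_le_one_of_le₀ (hαβ i) (hβ0 i))⟩

theorem Set.Icc_zero_indicator_one_subset_convexHull {ι : Type*} [Finite ι] (A : Set ι) :
    Set.Icc 0 (A.indicator 1) ⊆
      convexHull ℝ {x : ι → ℝ | ∃ B ⊆ A, x = B.indicator 1} := by
  intro α hα
  have hA0 (i : ι) : (0 : ℝ) ≤ A.indicator 1 i := Set.indicator_nonneg (fun _ _ => zero_le_one) i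
  have hcube : α ∈ convexHull ℝ (Set.univ.pi fun i => ({0, A.indicator 1 i} : Set ℝ)) := by
    refine mem_convexHull_pi fun i _ => ?_
    rw [convexHull_pair, segment_eq_Icc (hA0 i)]
    exact ⟨hα.1 i, hα.2 i⟩
  refine convexHull_mono ?_ hcube
  intro x hx
  have hx' (i : ι) : x i = 0 ∨ x i = A.indicator 1 i := hx i (Set.mem_univ i)
  have hsupp : {i | x i ≠ 0} ⊆ A := fun i hi => by
    by_contra hiA
    exact hi (((hx' i).resolve_left hi).trans (Set.indicator_of_notMem hiA _))
  refine ⟨{i | x i ≠ 0}, hsupp, funext fun i => ?_⟩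
  by_cases hxi : x i = 0
  · rw [Set.indicator_of_notMem (not_not.mpr hxi), hxi]
  · rw [Set.indicator_of_mem hxi, (hx' i).resolve_left hxi, Set.indicator_of_mem (hsupp hxi)]

section IncidenceVector

variable {V : Type*}

theorem incVec_eq_indicator (G H : SimpleGraph V) :
    incVec G H = {e : G.edgeSet | (e : Sym2 V) ∈ H.edgeSet}.indicator 1 := by
  ext e
  simp [incVec, Set.indicator]

theorem incVec_nonneg (G H : SimpleGraph V) : 0 ≤ incVec G H := by
  rw [incVec_eq_indicator]
  exact Set.indicator_nonneg fun _ _ => zero_le_one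

theorem incVec_monotone (G : SimpleGraph V) : Monotone (incVec G) := fun F H hFH => by
  simp only [incVec_eq_indicator]
  exact Set.indicator_le_indicator_of_subset (fun _ he => SimpleGraph.edgeSet_mono hFH he)
    fun _ => zero_le_one

theorem incVec_fromEdgeSet_image_val (G : SimpleGraph V) (B : Set G.edgeSet) :
    incVec G (SimpleGraph.fromEdgeSet (Subtype.val '' B)) = B.indicator 1 := by
  rw [incVec_eq_indicator]
  congr 1
  ext e
  simp [G.not_isDiag_of_mem_edgeSet e.2]

theorem Icc_zero_incVec_subset_convexHull [Finite V] (G : SimpleGraph V) {H : SimpleGraph V}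
    (hH : H.IsAcyclic) :
    Set.Icc 0 (incVec G H) ⊆
      convexHull ℝ {α | ∃ F : SimpleGraph V, F ≤ G ∧ F.IsAcyclic ∧ α = incVec G F} := by
  rw [incVec_eq_indicator]
  refine (Set.Icc_zero_indicator_one_subset_convexHull _).trans (convexHull_mono ?_)
  rintro _ ⟨B, hB, rfl⟩
  refine ⟨SimpleGraph.fromEdgeSet (Subtype.val '' B), ?_, hH.anti ?_,
    (incVec_fromEdgeSet_image_val G B).symm⟩
  · rw [SimpleGraph.fromEdgeSet_le]
    rintro _ ⟨⟨e, -, rfl⟩, -⟩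
    exact e.2
  · rw [SimpleGraph.fromEdgeSet_le]
    rintro _ ⟨⟨e, he, rfl⟩, -⟩
    exact hB he

end IncidenceVector

/-- The projection onto the α-coordinates of
{(α,β) : β ∈ conv(Ω), 0 ≤ α ≤ β} equals the spanning forest polytope. -/
theorem projection_eq_spanning_forest_polytope {V : Type*} [Fintype V]
    (G : SimpleGraph V) (hG : G.Connected) :
    {α : G.edgeSet → ℝ |
        ∃ β ∈ convexHull ℝ
          {β | ∃ T : SimpleGraph V, T ≤ G ∧ T.IsTree ∧ β = incVec G T},
        ∀ e : G.edgeSet, 0 ≤ α e ∧ α e ≤ β e}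
      = convexHull ℝ
          {α | ∃ F : SimpleGraph V, F ≤ G ∧ F.IsAcyclic ∧ α = incVec G F} := by
  have hbox (α β : G.edgeSet → ℝ) : (∀ e, 0 ≤ α e ∧ α e ≤ β e) ↔ α ∈ Set.Icc 0 β := forall_and
  simp_rw [hbox]
  apply subset_antisymm
  · rintro α ⟨β, hβ, hαβ⟩
    refine Set.Icc_zero_subset_of_mem_convexHull (convex_convexHull ℝ _) ?_ hβ hαβ
    rintro _ ⟨T, -, hT, rfl⟩
    exact ⟨incVec_nonneg G T, Icc_zero_incVec_subset_convexHull G hT.isAcyclic⟩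
  · refine convexHull_min ?_ (convex_convexHull ℝ _).setOf_exists_mem_Icc_zero
    rintro _ ⟨F, hFG, hF, rfl⟩
    obtain ⟨T, hFT, hTG, hT⟩ := hG.exists_isTree_le_of_le_of_isAcyclic hFG hF
    exact ⟨incVec G T, subset_convexHull ℝ _ ⟨T, hTG, hT, rfl⟩,
      incVec_nonneg G F, incVec_monotone G hFT⟩
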